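/- Locality of the principal part of an analytic regularization: let λ ∈ ℕ₀, let Ω ⊆ ℂ be a neighborhood of 0, and let {t^ζ}_{ζ ∈ Ω∖{0}} be a family of tempered distributions on ℝⁿ such that for each Schwartz function f the map ζ ↦ ⟨t^ζ, f⟩ is analytic on Ω∖{0} with a pole of finite order at 0, and such that lim_{ζ→0} ⟨t^ζ, g⟩ exists for every Schwartz function g with ∂^α g(0) = 0 for all |α| ≤ λ. Then each coefficient of a strictly negative power of ζ in the Laurent expansion of ζ ↦ ⟨t^ζ, ·⟩ is a distribution supported at the origin, i.e. a finite linear combination of derivatives ∂^α δ of the Dirac distribution at 0 with |α| ≤ λ. -/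

import Mathlib

open Filter Topology

/-- The multi-index derivative `∂^α` on Schwartz space: for each `j`,
differentiate `α j` times in the `j`-th coordinate direction. -/
noncomputable def schwartzMDeriv {n : ℕ} (α : Fin n → ℕ)
    (f : SchwartzMap (Fin n → ℝ) ℂ) : SchwartzMap (Fin n → ℝ) ℂ :=
  (List.finRange n).foldr
    (fun j g => (fun h => LineDeriv.lineDerivOpCLM ℝ (SchwartzMap (Fin n → ℝ) ℂ) (Pi.single j 1 : Fin n → ℝ) h)^[α j] g) f

/-- The finite set of multi-indices `α` with `|α| = Σⱼ αⱼ ≤ m`. -/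
noncomputable def multiIndices (n m : ℕ) : Finset (Fin n → ℕ) :=
  (Fintype.piFinset fun _ : Fin n => Finset.range (m + 1)).filter
    fun α => (∑ j, α j) ≤ m

/-!
The jet map `f ↦ (∂^α f(0))_{|α| ≤ λ}` takes values in a finite-dimensional space, so it has a
linear generalized inverse: there are test functions `e α` such that `f - ∑ α, ∂^α f(0) • e α`
vanishes to order `λ` at the origin for every `f`. On this remainder `ζ ↦ ⟨T ζ, ·⟩` is
holomorphic near `0` with a limit, so its singularity is removable. Hence the principal part of
`⟨T ζ, f⟩` is `∑ α, ∂^α f(0)` times the principal part of `⟨T ζ, e α⟩`, and each of its coefficients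
is a combination of the `∂^α δ`.
-/

open Finset
open scoped SchwartzMap

theorem LinearMap.exists_comp_comp_eq_self {K V W : Type*} [DivisionRing K] [AddCommGroup V]
    [Module K V] [AddCommGroup W] [Module K W] (f : V →ₗ[K] W) :
    ∃ g : W →ₗ[K] V, f ∘ₗ g ∘ₗ f = f := by
  obtain ⟨s, hs⟩ := f.rangeRestrict.exists_rightInverse_of_surjective f.range_rangeRestrict
  obtain ⟨g, hg⟩ := LinearMap.exists_extend s
  refine ⟨g, LinearMap.ext fun v => ?_⟩
  have hgv : g (f v) = s ⟨f v, LinearMap.mem_range_self f v⟩ :=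
    LinearMap.congr_fun hg ⟨f v, _⟩
  simpa [hgv] using
    congr_arg Subtype.val (LinearMap.congr_fun hs ⟨f v, LinearMap.mem_range_self f v⟩)

theorem Module.Dual.exists_forall_apply_sub_sum_smul_eq_zero {K V ι : Type*} [DivisionRing K]
    [AddCommGroup V] [Module K V] (φ : ι → Module.Dual K V) (s : Finset ι) :
    ∃ e : ι → V, ∀ v, ∀ i ∈ s, φ i (v - ∑ j ∈ s, φ j v • e j) = 0 := by
  classical
  set Φ : V →ₗ[K] s → K := LinearMap.pi fun i : s => φ i
  obtain ⟨g, hg⟩ := Φ.exists_comp_comp_eq_self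
  refine ⟨fun i => if h : i ∈ s then g (Pi.single ⟨i, h⟩ 1) else 0, fun v i hi => ?_⟩
  have hsum : ∑ j ∈ s, φ j v • (if h : j ∈ s then g (Pi.single ⟨j, h⟩ 1) else 0) = g (Φ v) := by
    rw [← sum_coe_sort s, ← univ_sum_single (Φ v), map_sum]
    refine sum_congr rfl fun j _ => ?_
    rw [dif_pos j.2, ← map_smul, ← Pi.single_smul, smul_eq_mul, mul_one]
    rfl
  have hΦ : φ i (g (Φ v)) = φ i v := congr_fun (LinearMap.congr_fun hg v) ⟨i, hi⟩
  rw [hsum, map_sub, hΦ, sub_self]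

theorem AnalyticAt.exists_eq_sum_pow_smul_add {𝕜 E : Type*} [NontriviallyNormedField 𝕜]
    [NormedAddCommGroup E] [NormedSpace 𝕜 E] {f : 𝕜 → E} {z₀ : 𝕜} (hf : AnalyticAt 𝕜 f z₀)
    (m : ℕ) : ∃ (c : ℕ → E) (R : 𝕜 → E), AnalyticAt 𝕜 R z₀ ∧
      ∀ z, f z = ∑ k ∈ range m, (z - z₀) ^ k • c k + (z - z₀) ^ m • R z := by
  induction m generalizing f with
  | zero => exact ⟨0, f, hf, by simp⟩
  | succ m ih =>
    obtain ⟨p, hp⟩ := hf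
    obtain ⟨c, R, hR, hfR⟩ := ih hp.has_fpower_series_dslope_fslope.analyticAt
    refine ⟨fun | 0 => f z₀ | k + 1 => c k, R, hR, fun z => ?_⟩
    rw [← sub_add_cancel (f z) (f z₀), ← sub_smul_dslope, hfR, sum_range_succ']
    simp only [smul_add, smul_sum, smul_smul, ← pow_succ', pow_zero, one_smul]
    abel

theorem Finset.sum_Icc_div_pow_eq {K : Type*} [Field K] (m : ℕ) (c : ℕ → K) {ζ : K}
    (hζ : ζ ≠ 0) :
    ∑ j ∈ Icc 1 m, c (m - j) / ζ ^ j = (∑ i ∈ range m, ζ ^ i * c i) / ζ ^ m := by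
  rw [sum_div]
  refine sum_nbij' (m - ·) (m - ·) ?_ ?_ ?_ ?_ fun j hj => ?_
  iterate 4 intro j hj; simp only [mem_Icc, mem_range] at hj ⊢; omega
  rw [mem_Icc] at hj
  rw [div_eq_div_iff (pow_ne_zero _ hζ) (pow_ne_zero _ hζ), mul_right_comm, ← pow_add,
    Nat.sub_add_cancel hj.2, mul_comm]

/-- `∑_{j=1}^m b j ζ⁻ʲ` is the principal part of `F` at `0`, `F` being read on `ζ ≠ 0` only. -/
def HasPrincipalPartAtZero (F : ℂ → ℂ) (m : ℕ) (b : ℕ → ℂ) : Prop :=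
  ∃ g : ℂ → ℂ, AnalyticAt ℂ g 0 ∧ ∀ ζ ≠ 0, g ζ = F ζ - ∑ j ∈ Icc 1 m, b j / ζ ^ j

namespace HasPrincipalPartAtZero

variable {F G : ℂ → ℂ} {m : ℕ} {b c : ℕ → ℂ}

theorem add (hF : HasPrincipalPartAtZero F m b) (hG : HasPrincipalPartAtZero G m c) :
    HasPrincipalPartAtZero (fun ζ => F ζ + G ζ) m (fun j => b j + c j) := by
  obtain ⟨f, hf, hfF⟩ := hF
  obtain ⟨g, hg, hgG⟩ := hG
  refine ⟨fun ζ => f ζ + g ζ, hf.add hg, fun ζ hζ => ?_⟩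
  simp only [hfF ζ hζ, hgG ζ hζ, add_div, sum_add_distrib]
  ring

theorem const_mul (hF : HasPrincipalPartAtZero F m b) (a : ℂ) :
    HasPrincipalPartAtZero (fun ζ => a * F ζ) m (fun j => a * b j) := by
  obtain ⟨f, hf, hfF⟩ := hF
  refine ⟨fun ζ => a * f ζ, analyticAt_const.mul hf, fun ζ hζ => ?_⟩
  simp only [hfF ζ hζ, mul_div_assoc, ← mul_sum, mul_sub]

theorem sum {ι : Type*} {s : Finset ι} {F : ι → ℂ → ℂ} {b : ι → ℕ → ℂ}
    (h : ∀ i ∈ s, HasPrincipalPartAtZero (F i) m (b i)) :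
    HasPrincipalPartAtZero (fun ζ => ∑ i ∈ s, F i ζ) m (fun j => ∑ i ∈ s, b i j) := by
  choose! f hf hfF using h
  refine ⟨fun ζ => ∑ i ∈ s, f i ζ, analyticAt_fun_sum _ hf, fun ζ hζ => ?_⟩
  simp only [sum_congr rfl fun i hi => hfF i hi ζ hζ, sum_sub_distrib,
    sum_div]
  rw [sum_comm]

theorem zero_of_tendsto {L : ℂ} (hd : ∀ᶠ z in 𝓝[≠] 0, DifferentiableAt ℂ F z)
    (ht : Tendsto F (𝓝[≠] 0) (𝓝 L)) : HasPrincipalPartAtZero F m 0 := by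
  refine ⟨Function.update F 0 L, ?_, fun ζ hζ => by simp [hζ]⟩
  refine Complex.analyticAt_of_differentiable_on_punctured_nhds_of_continuousAt ?_
    (continuousAt_update_same.2 ht)
  filter_upwards [hd, self_mem_nhdsWithin] with z hz hz0
  refine hz.congr_of_eventuallyEq ?_
  filter_upwards [eventually_ne_nhds hz0] with w hw
  exact Function.update_of_ne hw _ _

/-- The coefficients are Taylor coefficients of `ζ ^ (m - k) * H ζ` at `0`, read backwards. -/
theorem exists_of_eventuallyEq_div_pow {H : ℂ → ℂ} {k : ℕ} (hH : AnalyticAt ℂ H 0)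
    (hkm : k ≤ m) (hF : F =ᶠ[𝓝[≠] 0] fun ζ => H ζ / ζ ^ k) :
    ∃ b, HasPrincipalPartAtZero F m b := by
  have hH' : AnalyticAt ℂ (fun z => z ^ (m - k) * H z) 0 := by fun_prop
  obtain ⟨c, R, hR, hHR⟩ := hH'.exists_eq_sum_pow_smul_add m
  refine ⟨fun j => c (m - j),
    Function.update (fun ζ => F ζ - ∑ j ∈ Icc 1 m, c (m - j) / ζ ^ j) 0 (R 0),
    hR.congr (eventuallyEq_nhds_of_eventuallyEq_nhdsNE ?_ (by simp)),
    fun ζ hζ => Function.update_of_ne hζ _ _⟩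
  filter_upwards [hF, self_mem_nhdsWithin] with ζ hFζ hζ
  have hζ : ζ ≠ 0 := hζ
  have hHk : H ζ / ζ ^ k = ζ ^ (m - k) * H ζ / ζ ^ m := by
    rw [← Nat.sub_add_cancel hkm, pow_add, Nat.add_sub_cancel,
      mul_div_mul_left _ _ (pow_ne_zero _ hζ)]
  specialize hHR ζ
  simp only [sub_zero, smul_eq_mul] at hHR
  rw [Function.update_of_ne hζ, hFζ, Finset.sum_Icc_div_pow_eq m c hζ, hHk, hHR, add_div,
    mul_div_cancel_left₀ _ (pow_ne_zero _ hζ), add_sub_cancel_left]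

end HasPrincipalPartAtZero

noncomputable def schwartzMDerivₗ {n : ℕ} (α : Fin n → ℕ) : Module.End ℂ 𝓢(Fin n → ℝ, ℂ) :=
  (List.finRange n).foldr (fun j L => (LineDeriv.lineDerivOpCLM ℂ 𝓢(Fin n → ℝ, ℂ)
    (Pi.single j 1 : Fin n → ℝ)).toLinearMap ^ α j * L) 1

theorem coe_schwartzMDerivₗ {n : ℕ} (α : Fin n → ℕ) :
    ⇑(schwartzMDerivₗ α) = schwartzMDeriv α := by
  funext f
  unfold schwartzMDerivₗ schwartzMDeriv
  induction List.finRange n with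
  | nil => rfl
  | cons j l ih =>
    rw [List.foldr_cons, List.foldr_cons, Module.End.mul_apply, Module.End.pow_apply, ih]
    rfl

theorem exists_sub_sum_schwartzMDeriv_smul_vanishing (n lam : ℕ) :
    ∃ e : (Fin n → ℕ) → 𝓢(Fin n → ℝ, ℂ), ∀ f, ∀ α ∈ multiIndices n lam,
      schwartzMDeriv α (f - ∑ β ∈ multiIndices n lam, schwartzMDeriv β f 0 • e β) 0 = 0 := by
  simpa [← coe_schwartzMDerivₗ] using Module.Dual.exists_forall_apply_sub_sum_smul_eq_zero
    (fun α => (TemperedDistribution.delta (0 : Fin n → ℝ) : 𝓢(Fin n → ℝ, ℂ) →ₗ[ℂ] ℂ) ∘ₗ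
      schwartzMDerivₗ α) (multiIndices n lam)

/-- **Locality of the principal part of an analytic regularization.** Let
`{T ζ}` be a family of tempered distributions on `ℝⁿ`, analytic in
`ζ ∈ Ω \ {0}` with a pole of finite order at `0` for each test function, and
such that `lim_{ζ→0} ⟨T ζ, g⟩` exists for every Schwartz `g` vanishing to
order `λ` at the origin.  Then there are `m`, coefficient functionals `a j`
and constants `c j α` such that for each `f` the function
`ζ ↦ ⟨T ζ, f⟩ − Σ_{j=1}^m (a j f)·ζ^{−j}` extends analytically to `0`, and
each Laurent coefficient `a j` of a strictly negative power is a finite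
linear combination `Σ_{|α| ≤ λ} c j α · (−1)^{|α|} ∂^α f(0)` of derivatives of
the Dirac distribution at the origin. -/
theorem analytic_regularization_principal_part_local (n lam : ℕ)
    (Ω : Set ℂ) (hΩ : IsOpen Ω) (h0 : (0 : ℂ) ∈ Ω)
    (T : ℂ → (SchwartzMap (Fin n → ℝ) ℂ →L[ℂ] ℂ))
    (hanalytic : ∀ f : SchwartzMap (Fin n → ℝ) ℂ,
      AnalyticOnNhd ℂ (fun ζ => T ζ f) (Ω \ {0}))
    (hpole : ∀ f : SchwartzMap (Fin n → ℝ) ℂ,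
      ∃ (m : ℕ) (g : ℂ → ℂ), AnalyticAt ℂ g 0 ∧
        ∀ ζ ∈ Ω \ {0}, T ζ f = g ζ / ζ ^ m)
    (hlimit : ∀ g : SchwartzMap (Fin n → ℝ) ℂ,
      (∀ α ∈ multiIndices n lam, schwartzMDeriv α g 0 = 0) →
      ∃ L : ℂ, Tendsto (fun ζ : ℂ => T ζ g) (nhdsWithin 0 {0}ᶜ) (nhds L)) :
    ∃ (m : ℕ) (a : ℕ → SchwartzMap (Fin n → ℝ) ℂ → ℂ)
      (c : ℕ → (Fin n → ℕ) → ℂ),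
      (∀ f : SchwartzMap (Fin n → ℝ) ℂ,
        ∃ g : ℂ → ℂ, AnalyticAt ℂ g 0 ∧
          ∀ ζ ∈ Ω \ {0},
            g ζ = T ζ f - ∑ j ∈ Finset.Icc 1 m, a j f / ζ ^ j) ∧
      (∀ j ∈ Finset.Icc 1 m, ∀ f : SchwartzMap (Fin n → ℝ) ℂ,
        a j f = ∑ α ∈ multiIndices n lam,
          c j α * ((-1 : ℂ) ^ (∑ i, α i) * schwartzMDeriv α f 0)) := by
  set E := multiIndices n lam
  have hΩ0 : Ω \ {0} ∈ 𝓝[≠] (0 : ℂ) := sdiff_mem_nhdsWithin_compl (hΩ.mem_nhds h0) _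
  obtain ⟨e, he⟩ := exists_sub_sum_schwartzMDeriv_smul_vanishing n lam
  choose k H hH hTH using fun α => hpole (e α)
  choose! b hb using fun α (hα : α ∈ E) =>
    HasPrincipalPartAtZero.exists_of_eventuallyEq_div_pow (hH α) (le_sup hα)
      (eventually_of_mem hΩ0 (hTH α))
  refine ⟨E.sup k, fun j f => ∑ α ∈ E, schwartzMDeriv α f 0 * b α j,
    fun j α => (-1) ^ (∑ i, α i) * b α j, fun f => ?_, fun j _ f => ?_⟩
  · set r := f - ∑ α ∈ E, schwartzMDeriv α f 0 • e α
    obtain ⟨L, hL⟩ := hlimit r (he f)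
    have hr : HasPrincipalPartAtZero (fun ζ => T ζ r) (E.sup k) 0 :=
      .zero_of_tendsto (eventually_of_mem hΩ0 fun ζ hζ => (hanalytic r ζ hζ).differentiableAt) hL
    obtain ⟨g, hg, hgT⟩ :=
      hr.add (.sum fun α hα => (hb α hα).const_mul (schwartzMDeriv α f 0))
    refine ⟨g, hg, fun ζ hζ => ?_⟩
    have hTf : T ζ f = T ζ r + ∑ α ∈ E, schwartzMDeriv α f 0 * T ζ (e α) := by
      simp [r, map_sum, map_smul]
    simpa [hTf] using hgT ζ hζ.2
  · refine sum_congr rfl fun α _ => ?_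
    rw [mul_mul_mul_comm, ← pow_add, Even.neg_one_pow ⟨_, rfl⟩, one_mul, mul_comm]
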